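/- arXiv:1812.06214 — 2 statements merged into one kernel-verified Lean document; each statement's English description precedes it below -/
import Mathlib

section
/- Dynamical equivalence of two mass-action systems G_k and G'_{k'} holds if and only if for every vertex y0 ∈ V_G ∪ V_{G'}, the weighted sums of outgoing reaction vectors agree: Σ_{y0→y ∈ G} k_{y0→y}(y - y0) = Σ_{y0→y' ∈ G'} k'_{y0→y'}(y' - y0). -/
open Finset

noncomputable section
open scoped Classical

abbrev Vtx (n : ℕ) := Fin n → ℝ

/-- A reaction network: a finite set of directed edges between points of ℝⁿ. -/
abbrev Net (n : ℕ) := Finset (Vtx n × Vtx n)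

variable {n : ℕ}

/-- The vertices of a network. -/
def verts (G : Net n) : Finset (Vtx n) := G.image Prod.fst ∪ G.image Prod.snd

/-- The source vertices of a network. -/
def sources (G : Net n) : Finset (Vtx n) := G.image Prod.fst

/-- No self-loops. -/
def NoLoops (G : Net n) : Prop := ∀ e ∈ G, e.1 ≠ e.2

/-- `J` is a flux vector on `G`: positive on edges, zero on non-edges. -/
def IsFlux (G : Net n) (J : Vtx n × Vtx n → ℝ) : Prop :=
  (∀ e ∈ G, 0 < J e) ∧ ∀ e, e ∉ G → J e = 0

/-- Total outgoing flux at a vertex. -/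
def outSum (G : Net n) (J : Vtx n × Vtx n → ℝ) (v : Vtx n) : ℝ :=
  ∑ e ∈ G.filter (fun e => e.1 = v), J e

/-- Total incoming flux at a vertex. -/
def inSum (G : Net n) (J : Vtx n × Vtx n → ℝ) (v : Vtx n) : ℝ :=
  ∑ e ∈ G.filter (fun e => e.2 = v), J e

/-- Potential at a vertex: incoming minus outgoing flux (0 off the graph). -/
def potential (G : Net n) (J : Vtx n × Vtx n → ℝ) (v : Vtx n) : ℝ :=
  inSum G J v - outSum G J v

/-- Complex-balanced flux: in-flux equals out-flux at every vertex. -/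
def ComplexBalanced (G : Net n) (J : Vtx n × Vtx n → ℝ) : Prop :=
  ∀ v ∈ verts G, inSum G J v = outSum G J v

/-- Detailed-balanced flux: every edge is reversible and paired fluxes agree. -/
def DetailedBalanced (G : Net n) (J : Vtx n × Vtx n → ℝ) : Prop :=
  ∀ e ∈ G, (e.2, e.1) ∈ G ∧ J e = J (e.2, e.1)

/-- Steady state flux: flux-weighted reaction vectors sum to zero. -/
def SteadyFlux (G : Net n) (J : Vtx n × Vtx n → ℝ) : Prop :=
  ∑ e ∈ G, J e • (e.2 - e.1) = 0

/-- Flux-weighted sum of outgoing reaction vectors at a vertex. -/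
def netOut (G : Net n) (J : Vtx n × Vtx n → ℝ) (v : Vtx n) : Vtx n :=
  ∑ e ∈ G.filter (fun e => e.1 = v), J e • (e.2 - e.1)

/-- Flux equivalence of two flux systems. -/
def FluxEquiv (G : Net n) (J : Vtx n × Vtx n → ℝ)
    (G' : Net n) (J' : Vtx n × Vtx n → ℝ) : Prop :=
  ∀ v ∈ verts G ∪ verts G', netOut G J v = netOut G' J' v

/-- Reachability along directed edges. -/
def Reachable (G : Net n) : Vtx n → Vtx n → Prop :=
  Relation.ReflTransGen (fun a b => (a, b) ∈ G)

/-- Weak reversibility: every edge lies on a directed cycle. -/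
def WeaklyReversible (G : Net n) : Prop := ∀ e ∈ G, Reachable G e.2 e.1

/-- Reversibility: every edge has its reverse in the network. -/
def Reversible (G : Net n) : Prop := ∀ e ∈ G, (e.2, e.1) ∈ G

/-- Positive state. -/
def Pos (x : Vtx n) : Prop := ∀ i, 0 < x i

/-- Monomial `x^y = ∏ xᵢ^{yᵢ}` (real exponents). -/
def mono (x y : Vtx n) : ℝ := ∏ i, x i ^ y i

/-- `k` is a vector of rate constants on `G`: positive on edges, zero off. -/
def IsMAS (G : Net n) (k : Vtx n × Vtx n → ℝ) : Prop :=
  (∀ e ∈ G, 0 < k e) ∧ ∀ e, e ∉ G → k e = 0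

/-- The mass-action vector field of `G_k`. -/
def maf (G : Net n) (k : Vtx n × Vtx n → ℝ) (x : Vtx n) : Vtx n :=
  ∑ e ∈ G, (k e * mono x e.1) • (e.2 - e.1)

/-- Dynamical equivalence of mass-action systems. -/
def DynEquiv (G : Net n) (k : Vtx n × Vtx n → ℝ)
    (G' : Net n) (k' : Vtx n × Vtx n → ℝ) : Prop :=
  ∀ x : Vtx n, Pos x → maf G k x = maf G' k' x

/-- `x` is a complex-balanced steady state of `G_k`. -/
def CBsteady (G : Net n) (k : Vtx n × Vtx n → ℝ) (x : Vtx n) : Prop :=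
  ∀ v ∈ verts G,
    (∑ e ∈ G.filter (fun e => e.1 = v), k e * mono x v)
      = ∑ e ∈ G.filter (fun e => e.2 = v), k e * mono x e.1

/-- The stoichiometric subspace of a network. -/
def stoichSubspace (G : Net n) : Submodule ℝ (Vtx n) :=
  Submodule.span ℝ {d | ∃ e ∈ G, d = e.2 - e.1}

/-- Undirected connectivity relation of a network. -/
def connRel (G : Net n) : Vtx n → Vtx n → Prop :=
  Relation.ReflTransGen (fun a b => (a, b) ∈ G ∨ (b, a) ∈ G)

/-- The number of connected components of a network. -/
def numComponents (G : Net n) : ℕ :=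
  ((verts G).image (fun v => (verts G).filter (fun w => connRel G v w))).card

/-- The deficiency of a network. -/
def deficiency (G : Net n) : ℤ :=
  (verts G).card - numComponents G - Module.finrank ℝ (stoichSubspace G)

/-!
Grouping the reactions of `G` by their source shows that the mass-action vector field is
`∑_{y} x^y • netOut G k y`. Substituting `x = exp u`, the monomial `x^y` becomes the character
`u ↦ exp ⟪y, u⟫` of the additive group ℝⁿ; distinct vertices give distinct characters, which are
linearly independent by Dedekind's lemma. Hence two such fields agree on the positive orthant
exactly when their coefficients `netOut` agree at every vertex.
-/

/-- The monomial `y` as a character of ℝⁿ in logarithmic coordinates: `u ↦ (exp u)^y`. -/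
def expChar (y : Vtx n) : Multiplicative (Vtx n) →* ℝ where
  toFun u := Real.exp (∑ i, y i * Multiplicative.toAdd u i)
  map_one' := by simp
  map_mul' u v := by simp [← Real.exp_add, ← Finset.sum_add_distrib, mul_add]

lemma expChar_injective : Function.Injective (expChar (n := n)) := by
  intro y y' h
  funext i
  have hi := DFunLike.congr_fun h (Multiplicative.ofAdd (Pi.single i 1))
  simpa [expChar, Pi.single_apply] using hi

lemma mono_exp (u y : Vtx n) :
    mono (fun i => Real.exp (u i)) y = Real.exp (∑ i, y i * u i) := by
  rw [mono, Real.exp_sum]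
  refine Finset.prod_congr rfl fun i _ => ?_
  rw [Real.rpow_def_of_pos (Real.exp_pos _), Real.log_exp, mul_comm]

lemma linearIndependent_mono_exp :
    LinearIndependent ℝ (fun y : Vtx n => fun u : Vtx n => mono (fun i => Real.exp (u i)) y) := by
  have hli := (linearIndependent_monoidHom (Multiplicative (Vtx n)) ℝ).comp _ expChar_injective
  have hfun : (fun y : Vtx n => fun u : Vtx n => mono (fun i => Real.exp (u i)) y) =
      (LinearEquiv.funCongrLeft ℝ ℝ Multiplicative.ofAdd) ∘ ((⇑) ∘ expChar) := by
    ext y u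
    simp [mono_exp, expChar, LinearEquiv.funCongrLeft_apply]
  rw [hfun]
  exact hli.map' _ (LinearEquiv.ker _)

lemma eq_zero_of_sum_mono_smul_eq_zero {ι : Type*} (s : Finset (Vtx n)) (c : Vtx n → ι → ℝ)
    (h : ∀ x, Pos x → ∑ y ∈ s, mono x y • c y = 0) : ∀ y ∈ s, c y = 0 := by
  intro y hy
  funext j
  refine linearIndependent_iff'.mp linearIndependent_mono_exp s (fun y => c y j) ?_ y hy
  funext u
  have hu := congrFun (h _ fun i => Real.exp_pos (u i)) j
  simpa [Finset.sum_apply, mul_comm] using hu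

lemma maf_eq_sum_mono_smul_netOut (G : Net n) (k : Vtx n × Vtx n → ℝ) (V : Finset (Vtx n))
    (hV : ∀ e ∈ G, e.1 ∈ V) (x : Vtx n) :
    maf G k x = ∑ v ∈ V, mono x v • netOut G k v := by
  rw [maf, ← Finset.sum_fiberwise_of_maps_to hV]
  refine Finset.sum_congr rfl fun v _ => ?_
  rw [netOut, Finset.smul_sum]
  refine Finset.sum_congr rfl fun e he => ?_
  rw [(Finset.mem_filter.mp he).2, smul_smul, mul_comm]

lemma fst_mem_verts {G : Net n} {e : Vtx n × Vtx n} (he : e ∈ G) : e.1 ∈ verts G :=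
  Finset.mem_union_left _ (Finset.mem_image_of_mem Prod.fst he)

theorem stmt8_general (G G' : Net n) (k k' : Vtx n × Vtx n → ℝ) :
    DynEquiv G k G' k' ↔
      ∀ v ∈ verts G ∪ verts G', netOut G k v = netOut G' k' v := by
  set V := verts G ∪ verts G'
  have hmaf : ∀ x, maf G k x = ∑ v ∈ V, mono x v • netOut G k v :=
    maf_eq_sum_mono_smul_netOut G k V fun e he => mem_union_left _ (fst_mem_verts he)
  have hmaf' : ∀ x, maf G' k' x = ∑ v ∈ V, mono x v • netOut G' k' v :=
    maf_eq_sum_mono_smul_netOut G' k' V fun e he => mem_union_right _ (fst_mem_verts he)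
  constructor
  · intro h v hv
    refine sub_eq_zero.mp (eq_zero_of_sum_mono_smul_eq_zero V
      (fun w => netOut G k w - netOut G' k' w) (fun x hx => ?_) v hv)
    simp only [smul_sub, Finset.sum_sub_distrib, ← hmaf, ← hmaf', h x hx, sub_self]
  · intro h x _
    rw [hmaf, hmaf']
    exact Finset.sum_congr rfl fun v hv => by rw [h v hv]

theorem stmt8 (G G' : Net n) (k k' : Vtx n × Vtx n → ℝ)
    (hk : IsMAS G k) (hk' : IsMAS G' k') :
    DynEquiv G k G' k' ↔
      ∀ v ∈ verts G ∪ verts G', netOut G k v = netOut G' k' v :=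
  stmt8_general G G' k k'
end
end

section
/- A flux system (G, J) is flux equivalent to some complex-balanced flux system if and only if it is flux equivalent to a complex-balanced flux system (G', J') whose vertex set is contained in the set of source vertices of G. -/
open Finset

noncomputable section
open scoped Classical

variable {n : ℕ}

/-!
A vertex `v` of `G'` that is not a source of `G` has zero net reaction vector in `G'` as well,
so it can be bypassed: each pair of edges `x → v → y` is replaced by `x → y` with flux
`J'(x → v) J'(v → y) / T`, where `T` is the flux through `v`. This distributes the flux entering
`v` over the edges leaving it in proportion, so complex balance survives, and the net reaction
vector of each `x` is unchanged because that of `v` vanishes. Bypassing the vertices of `G'` that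
are not sources of `G` one at a time gives the claim.
-/

section Bypass

variable {α : Type*} [DecidableEq α] {S : Finset α} {J : α × α → ℝ} {v : α}

/-- `T = ∑ y ∈ S.erase v, J (v, y)` is the flux through `v` other than along a loop. When `T = 0`,
`x / 0 = 0` makes `bypass` simply delete `v`. -/
def bypass (S : Finset α) (J : α × α → ℝ) (v : α) (e : α × α) : ℝ :=
  if e.1 = v ∨ e.2 = v then 0
  else J e + J (e.1, v) * J (v, e.2) / ∑ y ∈ S.erase v, J (v, y)

lemma bypass_nonneg (hJ : ∀ e, 0 ≤ J e) (e : α × α) : 0 ≤ bypass S J v e := by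
  unfold bypass
  split_ifs
  · exact le_rfl
  · exact add_nonneg (hJ e)
      (div_nonneg (mul_nonneg (hJ _) (hJ _)) (sum_nonneg fun y _ => hJ _))

lemma mem_erase_of_bypass_ne_zero (hS : ∀ e, J e ≠ 0 → e.1 ∈ S ∧ e.2 ∈ S) {e : α × α}
    (he : bypass S J v e ≠ 0) : e.1 ∈ S.erase v ∧ e.2 ∈ S.erase v := by
  unfold bypass at he
  split_ifs at he with hv
  · exact absurd rfl he
  rw [not_or] at hv
  have hmem : e.1 ∈ S ∧ e.2 ∈ S := by
    by_cases h : J e = 0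
    · rw [h, zero_add] at he
      exact ⟨(hS _ (left_ne_zero_of_mul (left_ne_zero_of_mul he))).1,
        (hS _ (right_ne_zero_of_mul (left_ne_zero_of_mul he))).2⟩
    · exact hS e h
  exact ⟨mem_erase.2 ⟨hv.1, hmem.1⟩, mem_erase.2 ⟨hv.2, hmem.2⟩⟩

lemma bypass_of_ne {x y : α} (hx : x ≠ v) (hy : y ≠ v) :
    bypass S J v (x, y) = J (x, y) + J (x, v) * J (v, y) / ∑ y ∈ S.erase v, J (v, y) :=
  if_neg (by tauto)

lemma le_sum_erase_of_ne {f : α → ℝ} (hf : ∀ x, 0 ≤ f x) (hS : ∀ x, f x ≠ 0 → x ∈ S) {w : α}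
    (hw : w ≠ v) : f w ≤ ∑ x ∈ S.erase v, f x := by
  by_cases h : f w = 0
  · rw [h]
    exact sum_nonneg fun x _ => hf x
  · exact single_le_sum (fun x _ => hf x) (mem_erase.2 ⟨hw, hS w h⟩)

variable (hJ : ∀ e, 0 ≤ J e) (hS : ∀ e, J e ≠ 0 → e.1 ∈ S ∧ e.2 ∈ S) (hv : v ∈ S)
  (hbal : ∑ x ∈ S.erase v, J (x, v) = ∑ y ∈ S.erase v, J (v, y))
include hJ hS hv hbal

lemma sum_bypass_smul_of_ne {M : Type*} [AddCommGroup M] [Module ℝ M] {w : α} (hw : w ≠ v)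
    (φ : α → M) (hφ : ∑ y ∈ S.erase v, J (v, y) • φ y = (∑ y ∈ S.erase v, J (v, y)) • φ v) :
    ∑ y ∈ S, bypass S J v (w, y) • φ y = ∑ y ∈ S, J (w, y) • φ y := by
  set T := ∑ y ∈ S.erase v, J (v, y)
  have hcancel : J (w, v) / T * T = J (w, v) := div_mul_cancel_of_imp fun hT =>
    le_antisymm (hT ▸ hbal ▸ le_sum_erase_of_ne (fun x => hJ (x, v))
      (fun x hx => (hS _ hx).1) hw) (hJ _)
  calc ∑ y ∈ S, bypass S J v (w, y) • φ y
      = ∑ y ∈ S.erase v, (J (w, y) • φ y + (J (w, v) / T) • (J (v, y) • φ y)) := by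
        rw [← add_sum_erase S _ hv, bypass, if_pos (Or.inr rfl), zero_smul, zero_add]
        refine sum_congr rfl fun y hy => ?_
        rw [bypass_of_ne hw (ne_of_mem_erase hy), add_smul, smul_smul, mul_div_right_comm]
    _ = ∑ y ∈ S.erase v, J (w, y) • φ y + J (w, v) • φ v := by
        rw [sum_add_distrib, ← smul_sum, hφ, smul_smul, hcancel]
    _ = ∑ y ∈ S, J (w, y) • φ y := by
        rw [← add_sum_erase S _ hv, add_comm]

lemma sum_bypass_of_ne {w : α} (hw : w ≠ v) :
    ∑ y ∈ S, bypass S J v (w, y) = ∑ y ∈ S, J (w, y) := by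
  simpa using sum_bypass_smul_of_ne hJ hS hv hbal hw (fun _ => (1 : ℝ)) (by simp)

lemma sum_bypass_fst_of_ne {w : α} (hw : w ≠ v) :
    ∑ x ∈ S, bypass S J v (x, w) = ∑ x ∈ S, J (x, w) := by
  set T := ∑ y ∈ S.erase v, J (v, y)
  have hcancel : J (v, w) / T * T = J (v, w) := div_mul_cancel_of_imp fun hT =>
    le_antisymm (hT ▸ le_sum_erase_of_ne (fun y => hJ (v, y))
      (fun y hy => (hS _ hy).2) hw) (hJ _)
  calc ∑ x ∈ S, bypass S J v (x, w)
      = ∑ x ∈ S.erase v, (J (x, w) + J (v, w) / T * J (x, v)) := by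
        rw [← add_sum_erase S _ hv, bypass, if_pos (Or.inl rfl), zero_add]
        refine sum_congr rfl fun x hx => ?_
        rw [bypass_of_ne (ne_of_mem_erase hx) hw]
        ring
    _ = ∑ x ∈ S.erase v, J (x, w) + J (v, w) := by
        rw [sum_add_distrib, ← mul_sum, hbal, hcancel]
    _ = ∑ x ∈ S, J (x, w) := by
        rw [← add_sum_erase S _ hv, add_comm]

end Bypass

section FluxSystems

variable {G : Net n} {J : Vtx n × Vtx n → ℝ} {S : Finset (Vtx n)}

lemma sources_subset_verts (G : Net n) : sources G ⊆ verts G := subset_union_left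

lemma IsFlux.nonneg (hF : IsFlux G J) (e : Vtx n × Vtx n) : 0 ≤ J e := by
  by_cases he : e ∈ G
  · exact (hF.1 e he).le
  · exact (hF.2 e he).ge

lemma IsFlux.mem_verts_of_ne_zero (hF : IsFlux G J) {e : Vtx n × Vtx n} (he : J e ≠ 0) :
    e.1 ∈ verts G ∧ e.2 ∈ verts G := by
  have hG : e ∈ G := by_contra fun h => he (hF.2 e h)
  exact ⟨subset_union_left (mem_image_of_mem _ hG), subset_union_right (mem_image_of_mem _ hG)⟩

lemma sum_filter_fst_eq_sum {M : Type*} [AddCommMonoid M] (hS : verts G ⊆ S)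
    (f : Vtx n × Vtx n → M) (hf : ∀ e, e ∉ G → f e = 0) (v : Vtx n) :
    ∑ e ∈ G.filter (fun e => e.1 = v), f e = ∑ y ∈ S, f (v, y) := by
  rw [← sum_singleton (fun x => ∑ y ∈ S, f (x, y)) v, ← sum_product]
  refine sum_subset (fun e he => ?_) (fun e he hne => hf e fun hG => hne ?_)
  · obtain ⟨hG, rfl⟩ := mem_filter.1 he
    exact mem_product.2 ⟨mem_singleton_self _, hS (subset_union_right (mem_image_of_mem _ hG))⟩
  · exact mem_filter.2 ⟨hG, mem_singleton.1 (mem_product.1 he).1⟩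

lemma sum_filter_snd_eq_sum {M : Type*} [AddCommMonoid M] (hS : verts G ⊆ S)
    (f : Vtx n × Vtx n → M) (hf : ∀ e, e ∉ G → f e = 0) (v : Vtx n) :
    ∑ e ∈ G.filter (fun e => e.2 = v), f e = ∑ x ∈ S, f (x, v) := by
  rw [← sum_singleton (fun y => ∑ x ∈ S, f (x, y)) v, ← sum_product_right]
  refine sum_subset (fun e he => ?_) (fun e he hne => hf e fun hG => hne ?_)
  · obtain ⟨hG, rfl⟩ := mem_filter.1 he
    exact mem_product.2 ⟨hS (subset_union_left (mem_image_of_mem _ hG)), mem_singleton_self _⟩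
  · exact mem_filter.2 ⟨hG, mem_singleton.1 (mem_product.1 he).2⟩

lemma IsFlux.outSum_eq_sum (hF : IsFlux G J) (hS : verts G ⊆ S) (v : Vtx n) :
    outSum G J v = ∑ y ∈ S, J (v, y) :=
  sum_filter_fst_eq_sum hS J hF.2 v

lemma IsFlux.inSum_eq_sum (hF : IsFlux G J) (hS : verts G ⊆ S) (v : Vtx n) :
    inSum G J v = ∑ x ∈ S, J (x, v) :=
  sum_filter_snd_eq_sum hS J hF.2 v

lemma IsFlux.netOut_eq_sum (hF : IsFlux G J) (hS : verts G ⊆ S) (v : Vtx n) :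
    netOut G J v = ∑ y ∈ S, J (v, y) • (y - v) :=
  sum_filter_fst_eq_sum hS (fun e => J e • (e.2 - e.1)) (fun e he => by simp [hF.2 e he]) v

lemma sum_erase_smul_sub_eq (hF : IsFlux G J) (hS : verts G ⊆ S) {v : Vtx n} (hvS : v ∈ S)
    (hv : netOut G J v = 0) (w : Vtx n) :
    ∑ y ∈ S.erase v, J (v, y) • (y - w) = (∑ y ∈ S.erase v, J (v, y)) • (v - w) := by
  have hv' : ∑ y ∈ S.erase v, J (v, y) • (y - v) = 0 := by
    rw [← hv, hF.netOut_eq_sum hS, ← add_sum_erase S _ hvS, sub_self, smul_zero, zero_add]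
  calc ∑ y ∈ S.erase v, J (v, y) • (y - w)
      = ∑ y ∈ S.erase v, (J (v, y) • (y - v) + J (v, y) • (v - w)) :=
        sum_congr rfl fun y _ => by rw [← smul_add, sub_add_sub_cancel]
    _ = (∑ y ∈ S.erase v, J (v, y)) • (v - w) := by
        rw [sum_add_distrib, hv', zero_add, sum_smul]

lemma ComplexBalanced.sum_fst_eq_sum_snd (hF : IsFlux G J) (hCB : ComplexBalanced G J)
    (hS : verts G ⊆ S) (v : Vtx n) : ∑ x ∈ S, J (x, v) = ∑ y ∈ S, J (v, y) := by
  by_cases hv : v ∈ verts G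
  · rw [← hF.inSum_eq_sum hS, ← hF.outSum_eq_sum hS, hCB v hv]
  · rw [sum_eq_zero fun x _ => by_contra fun h => hv (hF.mem_verts_of_ne_zero h).2,
      sum_eq_zero fun y _ => by_contra fun h => hv (hF.mem_verts_of_ne_zero h).1]

lemma netOut_eq_zero_of_notMem_sources {v : Vtx n} (hv : v ∉ sources G) :
    netOut G J v = 0 :=
  sum_eq_zero fun _ he => absurd ((mem_filter.1 he).2 ▸ mem_image_of_mem _ (mem_filter.1 he).1) hv

lemma fluxEquiv_iff {G' : Net n} {J' : Vtx n × Vtx n → ℝ} :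
    FluxEquiv G J G' J' ↔ netOut G J = netOut G' J' := by
  refine ⟨fun h => funext fun v => ?_, fun h v _ => congrFun h v⟩
  by_cases hv : v ∈ verts G ∪ verts G'
  · exact h v hv
  · rw [notMem_union] at hv
    rw [netOut_eq_zero_of_notMem_sources fun h => hv.1 (sources_subset_verts G h),
      netOut_eq_zero_of_notMem_sources fun h => hv.2 (sources_subset_verts G' h)]

def netOfFlux (S : Finset (Vtx n)) (K : Vtx n × Vtx n → ℝ) : Net n :=
  (S ×ˢ S).filter fun e => K e ≠ 0

lemma isFlux_netOfFlux {K : Vtx n × Vtx n → ℝ} (hK : ∀ e, 0 ≤ K e)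
    (hS : ∀ e, K e ≠ 0 → e.1 ∈ S ∧ e.2 ∈ S) : IsFlux (netOfFlux S K) K := by
  refine ⟨fun e he => (hK e).lt_of_ne' (mem_filter.1 he).2, fun e he => by_contra fun h => he ?_⟩
  exact mem_filter.2 ⟨mem_product.2 (hS e h), h⟩

lemma verts_netOfFlux_subset (K : Vtx n × Vtx n → ℝ) : verts (netOfFlux S K) ⊆ S := by
  intro x hx
  rcases mem_union.1 hx with h | h <;> obtain ⟨e, he, rfl⟩ := mem_image.1 h
  · exact (mem_product.1 (mem_filter.1 he).1).1
  · exact (mem_product.1 (mem_filter.1 he).1).2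

lemma exists_bypass_vertex (hF : IsFlux G J) (hCB : ComplexBalanced G J) {v : Vtx n}
    (hv : netOut G J v = 0) :
    ∃ (G' : Net n) (J' : Vtx n × Vtx n → ℝ), IsFlux G' J' ∧ ComplexBalanced G' J' ∧
      netOut G' J' = netOut G J ∧ verts G' ⊆ (verts G).erase v := by
  set S := insert v (verts G)
  have hGS : verts G ⊆ S := subset_insert v (verts G)
  have hvS : v ∈ S := mem_insert_self v (verts G)
  have hsupp : ∀ e, J e ≠ 0 → e.1 ∈ S ∧ e.2 ∈ S := fun e he =>
    (hF.mem_verts_of_ne_zero he).imp (fun h => hGS h) (fun h => hGS h)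
  have hbal : ∑ x ∈ S.erase v, J (x, v) = ∑ y ∈ S.erase v, J (v, y) := by
    have := hCB.sum_fst_eq_sum_snd hF hGS v
    rwa [← add_sum_erase S _ hvS, ← add_sum_erase S (fun y => J (v, y)) hvS,
      add_right_inj] at this
  set K := bypass S J v
  have hK : IsFlux (netOfFlux (S.erase v) K) K :=
    isFlux_netOfFlux (bypass_nonneg hF.nonneg) fun e he =>
      mem_erase_of_bypass_ne_zero hsupp he
  have hKS : verts (netOfFlux (S.erase v) K) ⊆ S :=
    (verts_netOfFlux_subset K).trans (erase_subset v S)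
  refine ⟨_, K, hK, fun w hw => ?_, funext fun w => ?_, ?_⟩
  · have hwv : w ≠ v := ne_of_mem_erase (verts_netOfFlux_subset K hw)
    rw [hK.inSum_eq_sum hKS, hK.outSum_eq_sum hKS,
      sum_bypass_fst_of_ne hF.nonneg hsupp hvS hbal hwv,
      sum_bypass_of_ne hF.nonneg hsupp hvS hbal hwv, hCB.sum_fst_eq_sum_snd hF hGS]
  · rw [hK.netOut_eq_sum hKS, hF.netOut_eq_sum hGS]
    by_cases hwv : w = v
    · subst hwv
      rw [← hF.netOut_eq_sum hGS, hv]
      exact sum_eq_zero fun y _ => by simp [K, bypass]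
    · exact sum_bypass_smul_of_ne hF.nonneg hsupp hvS hbal hwv _
        (sum_erase_smul_sub_eq hF hGS hvS hv w)
  · exact (verts_netOfFlux_subset K).trans (erase_insert_eq_erase (verts G) v).subset

lemma exists_verts_subset_sdiff (B : Finset (Vtx n)) (hF : IsFlux G J)
    (hCB : ComplexBalanced G J) (hB : ∀ v ∈ B, netOut G J v = 0) :
    ∃ (G' : Net n) (J' : Vtx n × Vtx n → ℝ), IsFlux G' J' ∧ ComplexBalanced G' J' ∧
      netOut G' J' = netOut G J ∧ verts G' ⊆ verts G \ B := by
  induction B using Finset.induction_on with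
  | empty => exact ⟨G, J, hF, hCB, rfl, by simp⟩
  | insert a B ha ih =>
    obtain ⟨G₁, J₁, hF₁, hCB₁, hnet₁, hsub₁⟩ := ih fun v hv => hB v (mem_insert_of_mem hv)
    obtain ⟨G₂, J₂, hF₂, hCB₂, hnet₂, hsub₂⟩ :=
      exists_bypass_vertex hF₁ hCB₁ (hnet₁ ▸ hB a (mem_insert_self a B))
    refine ⟨G₂, J₂, hF₂, hCB₂, hnet₂.trans hnet₁, fun x hx => ?_⟩
    obtain ⟨hxa, hx₁⟩ := mem_erase.1 (hsub₂ hx)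
    obtain ⟨hxG, hxB⟩ := mem_sdiff.1 (hsub₁ hx₁)
    exact mem_sdiff.2 ⟨hxG, by simp [hxa, hxB]⟩

end FluxSystems

theorem stmt12_general (G : Net n) (J : Vtx n × Vtx n → ℝ) :
    (∃ (G' : Net n) (J' : Vtx n × Vtx n → ℝ),
      IsFlux G' J' ∧ ComplexBalanced G' J' ∧ FluxEquiv G J G' J') ↔
    (∃ (G' : Net n) (J' : Vtx n × Vtx n → ℝ),
      IsFlux G' J' ∧ ComplexBalanced G' J' ∧ FluxEquiv G J G' J' ∧
        verts G' ⊆ sources G) := by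
  refine ⟨fun ⟨G', J', hF, hCB, hFE⟩ => ?_, fun ⟨G', J', hF, hCB, hFE, _⟩ => ⟨G', J', hF, hCB, hFE⟩⟩
  rw [fluxEquiv_iff] at hFE
  have hnonsource : ∀ v ∈ verts G' \ sources G, netOut G' J' v = 0 := fun v hv => by
    rw [← hFE]
    exact netOut_eq_zero_of_notMem_sources (mem_sdiff.1 hv).2
  obtain ⟨G'', J'', hF'', hCB'', hnet, hsub⟩ :=
    exists_verts_subset_sdiff _ hF hCB hnonsource
  refine ⟨G'', J'', hF'', hCB'', fluxEquiv_iff.2 (hFE.trans hnet.symm), fun v hv => ?_⟩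
  have := mem_sdiff.1 (hsub hv)
  simpa [this.1] using this.2

theorem stmt12 (G : Net n) (J : Vtx n × Vtx n → ℝ) (hJ : IsFlux G J) :
    (∃ (G' : Net n) (J' : Vtx n × Vtx n → ℝ),
      IsFlux G' J' ∧ ComplexBalanced G' J' ∧ FluxEquiv G J G' J') ↔
    (∃ (G' : Net n) (J' : Vtx n × Vtx n → ℝ),
      IsFlux G' J' ∧ ComplexBalanced G' J' ∧ FluxEquiv G J G' J' ∧
        verts G' ⊆ sources G) :=
  stmt12_general G J
end
end
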